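/- Let L be a finite set, Q a generator matrix on L, and suppose the associated transition semigroup P_t satisfies the uniform exponential ergodicity bound sup_{i ∈ L} ‖P_t(i,·) − μ‖_var ≤ K·e^{−ρ·t} for all t > 0, where μ is the stationary distribution, K > 0, ρ > 0. Let b̃ : L → ℝ^d be bounded with ∑_{i ∈ L} b̃(i)·μ(i) = 0 (the centering condition). Then Φ(i) := ∫₀^∞ (P_t b̃)(i) dt is well-defined (the integral converges absolutely), satisfies the bound sup_i ‖Φ(i)‖ ≤ (K/ρ)·sup_i ‖b̃(i)‖, and solves the Poisson equation Q·Φ = −b̃, i.e. ∑_j q_{ij}·Φ(j) = −b̃(i) for each i ∈ L. Moreover ∑_i Φ(i)·μ(i) = 0. -/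

import Mathlib

open MeasureTheory

open Filter Set
open scoped Topology

section auxderiv
variable {L : Type*} [Fintype L] [DecidableEq L]
  {E : Type*} [NormedAddCommGroup E] [NormedSpace ℝ E]

attribute [local instance] Matrix.linftyOpNormedRing Matrix.linftyOpNormedAlgebra

noncomputable def entrySumCLM (i : L) (b : L → E) : Matrix L L ℝ →L[ℝ] E :=
  LinearMap.toContinuousLinearMap
    { toFun := fun M => ∑ k, M i k • b k
      map_add' := by
        intro M N; simp [Matrix.add_apply, add_smul, Finset.sum_add_distrib]
      map_smul' := by
        intro c M; simp [Matrix.smul_apply, smul_smul, Finset.smul_sum] }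

theorem hasDerivAt_expSum (Q : Matrix L L ℝ) (b : L → E) (i : L) (t : ℝ) :
    HasDerivAt (fun u : ℝ => ∑ k, (NormedSpace.exp (u • Q)) i k • b k)
      (∑ k, ((NormedSpace.exp (t • Q)) * Q) i k • b k) t := by
  have h := hasDerivAt_exp_smul_const (𝕂 := ℝ) Q t
  have h2 := (entrySumCLM i b).hasFDerivAt.comp_hasDerivAt t h
  exact h2

end auxderiv

section semig
variable {L : Type*} [Fintype L] [DecidableEq L]

theorem exp_smul_add (Q : Matrix L L ℝ) (s t : ℝ) :
    NormedSpace.exp ((s + t) • Q) = NormedSpace.exp (s • Q) * NormedSpace.exp (t • Q) := by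
  rw [add_smul]
  exact Matrix.exp_add_of_commute _ _ (((Commute.refl Q).smul_left s).smul_right t)

theorem exp_smul_comm (Q : Matrix L L ℝ) (t : ℝ) :
    Q * NormedSpace.exp (t • Q) = NormedSpace.exp (t • Q) * Q :=
  (((Commute.refl Q).smul_right t).exp_right).eq

end semig

/-- Poisson equation for a uniformly exponentially ergodic finite-state generator:
Φ(i) = ∫₀^∞ (P_t b̃)(i) dt is well-defined, bounded by (K/ρ)·sup‖b̃‖, solves QΦ = −b̃,
and is centered with respect to μ. -/
theorem stmt_11 {L : Type*} [Fintype L] [Nonempty L] [DecidableEq L]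
    {E : Type*} [NormedAddCommGroup E] [NormedSpace ℝ E] [CompleteSpace E]
    (Q : Matrix L L ℝ) (hoff : ∀ i j, i ≠ j → 0 ≤ Q i j) (hrow : ∀ i, ∑ j, Q i j = 0)
    (μ : L → ℝ) (hμ0 : ∀ i, 0 ≤ μ i) (hμ1 : ∑ i, μ i = 1)
    (K ρ : ℝ) (hK : 0 < K) (hρ : 0 < ρ)
    (herg : ∀ t > (0:ℝ), ∀ i,
      (∑ j, |(NormedSpace.exp (t • Q)) i j - μ j|) ≤ K * Real.exp (-ρ * t))
    (btilde : L → E) (hcenter : ∑ i, μ i • btilde i = 0) :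
    (∀ i, IntegrableOn
        (fun t => ∑ j, (NormedSpace.exp (t • Q)) i j • btilde j) (Set.Ioi (0:ℝ))) ∧
    (∀ i, ‖∫ t in Set.Ioi (0:ℝ), ∑ j, (NormedSpace.exp (t • Q)) i j • btilde j‖
        ≤ K / ρ * (Finset.univ.sup' Finset.univ_nonempty fun i => ‖btilde i‖)) ∧
    (∀ i, ∑ j, Q i j •
        (∫ t in Set.Ioi (0:ℝ), ∑ k, (NormedSpace.exp (t • Q)) j k • btilde k)
        = - btilde i) ∧
    (∑ i, μ i •
        (∫ t in Set.Ioi (0:ℝ), ∑ k, (NormedSpace.exp (t • Q)) i k • btilde k)) = 0 := by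
  set P : ℝ → Matrix L L ℝ := fun t => NormedSpace.exp (t • Q) with hPdef
  set B : ℝ := Finset.univ.sup' Finset.univ_nonempty fun i => ‖btilde i‖ with hBdef
  have hB : ∀ j, ‖btilde j‖ ≤ B := by
    intro j; rw [hBdef]; exact Finset.le_sup' (fun i => ‖btilde i‖) (Finset.mem_univ j)
  have hB0 : 0 ≤ B := le_trans (norm_nonneg _) (hB (Classical.arbitrary L))
  set F : L → ℝ → E := fun i t => ∑ j, P t i j • btilde j with hFdef
  -- centered rewriting
  have hFsub : ∀ i t, F i t = ∑ j, (P t i j - μ j) • btilde j := by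
    intro i t
    calc F i t = (∑ j, (P t i j - μ j) • btilde j) + ∑ j, μ j • btilde j := by
          rw [← Finset.sum_add_distrib]
          simp [sub_smul]
          rfl
      _ = ∑ j, (P t i j - μ j) • btilde j := by rw [hcenter, add_zero]
  -- key bound
  have hFb : ∀ i, ∀ t > (0:ℝ), ‖F i t‖ ≤ K * Real.exp (-ρ * t) * B := by
    intro i t ht
    rw [hFsub]
    calc ‖∑ j, (P t i j - μ j) • btilde j‖ ≤ ∑ j, ‖(P t i j - μ j) • btilde j‖ :=
          norm_sum_le _ _
      _ ≤ ∑ j, |P t i j - μ j| * B := by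
          refine Finset.sum_le_sum fun j _ => ?_
          rw [norm_smul, Real.norm_eq_abs]
          exact mul_le_mul_of_nonneg_left (hB j) (abs_nonneg _)
      _ = (∑ j, |P t i j - μ j|) * B := by rw [Finset.sum_mul]
      _ ≤ K * Real.exp (-ρ * t) * B :=
          mul_le_mul_of_nonneg_right (herg t ht i) hB0
  -- continuity
  have hcont : ∀ i, Continuous (F i) := fun i =>
    continuous_iff_continuousAt.2 fun t => (hasDerivAt_expSum Q btilde i t).continuousAt
  -- integrability of the dominating function
  have hgInt : IntegrableOn (fun t => K * Real.exp (-ρ * t) * B) (Set.Ioi (0:ℝ)) :=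
    ((exp_neg_integrableOn_Ioi 0 hρ).const_mul K).mul_const B
  -- part 1
  have hInt : ∀ i, IntegrableOn (F i) (Set.Ioi (0:ℝ)) := by
    intro i
    refine Integrable.mono' hgInt (hcont i).aestronglyMeasurable ?_
    exact (ae_restrict_iff' measurableSet_Ioi).2 (ae_of_all _ fun t ht => hFb i t ht)
  -- value of the exponential integral
  have hIexp : (∫ t in Set.Ioi (0:ℝ), Real.exp (-ρ * t)) = 1 / ρ := by
    have hderiv : ∀ t ∈ Set.Ioi (0:ℝ),
        HasDerivAt (fun u => -(1 / ρ) * Real.exp (-ρ * u)) (Real.exp (-ρ * t)) t := by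
      intro t _
      have h1 : HasDerivAt (fun u : ℝ => -ρ * u) (-ρ) t := by
        simpa using (hasDerivAt_id t).const_mul (-ρ)
      have h2 := (Real.hasDerivAt_exp (-ρ * t)).comp t h1
      have h3 := h2.const_mul (-(1 / ρ))
      have hρne : ρ ≠ 0 := hρ.ne'
      exact h3.congr_deriv (by field_simp)
    have htend : Tendsto (fun u => -(1 / ρ) * Real.exp (-ρ * u)) atTop (𝓝 0) := by
      have h1 : Tendsto (fun u : ℝ => -ρ * u) atTop atBot := by
        have hmul : Tendsto (fun u : ℝ => ρ * u) atTop atTop :=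
          Tendsto.const_mul_atTop hρ tendsto_id
        have h2 := tendsto_neg_atTop_atBot.comp hmul
        exact h2.congr fun u => (neg_mul ρ u).symm
      have h2 := Real.tendsto_exp_atBot.comp h1
      have := h2.const_mul (-(1 / ρ))
      simpa using this
    have hc : ContinuousWithinAt (fun u => -(1 / ρ) * Real.exp (-ρ * u)) (Set.Ici 0) 0 :=
      (Continuous.continuousWithinAt (by continuity))
    have := integral_Ioi_of_hasDerivAt_of_tendsto hc hderiv
      (exp_neg_integrableOn_Ioi 0 hρ) htend
    rw [this]; simp
  -- part 2
  have hbound : ∀ i, ‖∫ t in Set.Ioi (0:ℝ), F i t‖ ≤ K / ρ * B := by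
    intro i
    have h1 : ‖∫ t in Set.Ioi (0:ℝ), F i t‖
        ≤ ∫ t in Set.Ioi (0:ℝ), K * Real.exp (-ρ * t) * B :=
      norm_integral_le_of_norm_le hgInt
        ((ae_restrict_iff' measurableSet_Ioi).2 (ae_of_all _ fun t ht => hFb i t ht))
    have h2 : (∫ t in Set.Ioi (0:ℝ), K * Real.exp (-ρ * t) * B)
        = K / ρ * B := by
      have : (fun t => K * Real.exp (-ρ * t) * B) = fun t => (K * B) * Real.exp (-ρ * t) := by
        funext t; ring
      rw [this, MeasureTheory.integral_const_mul, hIexp]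
      ring
    linarith [h1, h2.le, h2.ge]
  -- semigroup consequences (scalar limits)
  have hglim : Tendsto (fun t => K * Real.exp (-ρ * t)) atTop (𝓝 0) := by
    have h1 : Tendsto (fun u : ℝ => -ρ * u) atTop atBot := by
      have hmul : Tendsto (fun u : ℝ => ρ * u) atTop atTop :=
        Tendsto.const_mul_atTop hρ tendsto_id
      have h2 := tendsto_neg_atTop_atBot.comp hmul
      exact h2.congr fun u => (neg_mul ρ u).symm
    have h2 := Real.tendsto_exp_atBot.comp h1
    simpa using h2.const_mul K
  -- stationarity: ∑ i, μ i * P s i k = μ k for s > 0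
  have hlimm : ∀ k, Tendsto (fun t => ∑ i, μ i * P t i k) atTop (𝓝 (μ k)) := by
    intro k
    rw [← tendsto_sub_nhds_zero_iff]
    refine squeeze_zero_norm' ?_ hglim
    filter_upwards [eventually_gt_atTop (0:ℝ)] with t ht
    have heq : (∑ i, μ i * P t i k) - μ k = ∑ i, μ i * (P t i k - μ k) := by
      have h' : ∑ i, μ i * (P t i k - μ k)
          = (∑ i, μ i * P t i k) - (∑ i, μ i) * μ k := by
        rw [Finset.sum_mul, ← Finset.sum_sub_distrib]
        congr 1; funext i; ring
      rw [h', hμ1, one_mul]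
    rw [Real.norm_eq_abs, heq]
    calc |∑ i, μ i * (P t i k - μ k)| ≤ ∑ i, |μ i * (P t i k - μ k)| :=
          Finset.abs_sum_le_sum_abs _ _
      _ ≤ ∑ i, μ i * (K * Real.exp (-ρ * t)) := by
          refine Finset.sum_le_sum fun i _ => ?_
          rw [abs_mul, abs_of_nonneg (hμ0 i)]
          refine mul_le_mul_of_nonneg_left ?_ (hμ0 i)
          calc |P t i k - μ k| ≤ ∑ j, |P t i j - μ j| :=
                Finset.single_le_sum (f := fun j => |P t i j - μ j|)
                  (fun j _ => abs_nonneg _) (Finset.mem_univ k)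
            _ ≤ K * Real.exp (-ρ * t) := herg t ht i
      _ = K * Real.exp (-ρ * t) := by rw [← Finset.sum_mul, hμ1, one_mul]
  have hstat : ∀ s > (0:ℝ), ∀ k, ∑ i, μ i * P s i k = μ k := by
    intro s hs k
    have h1 : Tendsto (fun t => ∑ i, μ i * P (t + s) i k) atTop (𝓝 (μ k)) := by
      have := (hlimm k).comp (tendsto_atTop_add_const_right atTop s tendsto_id)
      simpa [Function.comp_def] using this
    have h2 : (fun t => ∑ i, μ i * P (t + s) i k)
        = fun t => ∑ j, (∑ i, μ i * P t i j) * P s j k := by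
      funext t
      have hP2 : ∀ i, P (t + s) i k = ∑ j, P t i j * P s j k := by
        intro i
        simp only [hPdef]
        rw [exp_smul_add Q t s, Matrix.mul_apply]
      simp only [hP2, Finset.mul_sum]
      rw [Finset.sum_comm]
      refine Finset.sum_congr rfl fun j _ => ?_
      rw [Finset.sum_mul]
      exact Finset.sum_congr rfl fun i _ => by ring
    rw [h2] at h1
    have h3 : Tendsto (fun t => ∑ j, (∑ i, μ i * P t i j) * P s j k) atTop
        (𝓝 (∑ j, μ j * P s j k)) :=
      tendsto_finset_sum _ fun j _ => (hlimm j).mul_const _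
    exact (tendsto_nhds_unique h1 h3).symm
  refine ⟨fun i => hInt i, fun i => hbound i, ?_, ?_⟩
  · -- Poisson equation
    intro i
    show (∑ j, Q i j • ∫ t in Set.Ioi (0:ℝ), F j t) = - btilde i
    have hswap : (∑ j, Q i j • ∫ t in Set.Ioi (0:ℝ), F j t)
        = ∫ t in Set.Ioi (0:ℝ), ∑ j, Q i j • F j t := by
      rw [show (∑ j, Q i j • ∫ t in Set.Ioi (0:ℝ), F j t)
          = ∑ j, ∫ t in Set.Ioi (0:ℝ), Q i j • F j t from
        Finset.sum_congr rfl fun j _ => (integral_smul (Q i j) (F j)).symm]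
      exact (integral_finset_sum (f := fun j t => Q i j • F j t)
        Finset.univ (fun j _ => (hInt j).smul (Q i j))).symm
    have hGF : ∀ t : ℝ, (∑ j, Q i j • F j t) = ∑ k, (P t * Q) i k • btilde k := by
      intro t
      have h1 : ∀ j, Q i j • F j t = ∑ k, (Q i j * P t j k) • btilde k := by
        intro j
        rw [Finset.smul_sum]
        exact Finset.sum_congr rfl fun k _ => smul_smul _ _ _
      simp only [h1]
      rw [Finset.sum_comm]
      refine Finset.sum_congr rfl fun k _ => ?_
      rw [← Finset.sum_smul, ← Matrix.mul_apply,
        show Q * P t = P t * Q from exp_smul_comm Q t]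
    have hF'int : IntegrableOn (fun t => ∑ k, (P t * Q) i k • btilde k) (Set.Ioi (0:ℝ)) := by
      have h2 := integrable_finset_sum (μ := volume.restrict (Set.Ioi (0:ℝ)))
        Finset.univ (fun j (_ : j ∈ Finset.univ) => (hInt j).smul (Q i j))
      exact h2.congr (ae_of_all _ fun t => hGF t)
    have hgB : Tendsto (fun t => K * Real.exp (-ρ * t) * B) atTop (𝓝 0) := by
      have := hglim.mul_const B; simpa using this
    have htend0 : Tendsto (F i) atTop (𝓝 0) := by
      refine squeeze_zero_norm' ?_ hgB
      filter_upwards [eventually_gt_atTop (0:ℝ)] with t ht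
      exact hFb i t ht
    have hFTC := integral_Ioi_of_hasDerivAt_of_tendsto
      ((hcont i).continuousWithinAt)
      (fun t _ => hasDerivAt_expSum Q btilde i t) hF'int htend0
    have hF0 : F i 0 = btilde i := by
      simp [hFdef, hPdef, Matrix.one_apply, ite_smul]
    calc (∑ j, Q i j • ∫ t in Set.Ioi (0:ℝ), F j t)
        = ∫ t in Set.Ioi (0:ℝ), ∑ j, Q i j • F j t := hswap
      _ = ∫ t in Set.Ioi (0:ℝ), ∑ k, (P t * Q) i k • btilde k :=
          integral_congr_ae (ae_of_all _ fun t => hGF t)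
      _ = 0 - F i 0 := hFTC
      _ = - btilde i := by rw [hF0, zero_sub]
  · -- centering
    show (∑ i, μ i • ∫ t in Set.Ioi (0:ℝ), F i t) = 0
    have hswap : (∑ i, μ i • ∫ t in Set.Ioi (0:ℝ), F i t)
        = ∫ t in Set.Ioi (0:ℝ), ∑ i, μ i • F i t := by
      rw [show (∑ i, μ i • ∫ t in Set.Ioi (0:ℝ), F i t)
          = ∑ i, ∫ t in Set.Ioi (0:ℝ), μ i • F i t from
        Finset.sum_congr rfl fun i _ => (integral_smul (μ i) (F i)).symm]
      exact (integral_finset_sum (f := fun i t => μ i • F i t)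
        Finset.univ (fun i _ => (hInt i).smul (μ i))).symm
    have hzero : ∀ t ∈ Set.Ioi (0:ℝ), (∑ i, μ i • F i t) = 0 := by
      intro t ht
      have h1 : (∑ i, μ i • F i t) = ∑ k, (∑ i, μ i * P t i k) • btilde k := by
        simp only [hFdef, Finset.smul_sum, smul_smul]
        rw [Finset.sum_comm]
        exact Finset.sum_congr rfl fun k _ => (Finset.sum_smul).symm
      rw [h1]
      have h2 : ∀ k, (∑ i, μ i * P t i k) = μ k := fun k => hstat t ht k
      simp only [h2]
      exact hcenter
    rw [hswap, MeasureTheory.setIntegral_congr_fun measurableSet_Ioi hzero]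
    simp
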